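/- arXiv:2006.09171 — 2 statements merged into one kernel-verified Lean document; each statement's English description precedes it below -/
import Mathlib

section
/- Let I be a finite nonempty type, ι a finite type indexing the random variables, K a type of secret inputs, i : ι, op : I → I → I a binary operation, and f g : K → (ι → I) → I. Assume: (i) for every k : K, f k is invertible at coordinate i; (ii) for every k : K, g k does not depend on coordinate i; and (iii) g is statistically independent of the secret, i.e. for all k₁ k₂ : K, PMF.map (g k₁) (PMF.uniformOfFintype (ι → I)) = PMF.map (g k₂) (PMF.uniformOfFintype (ι → I)). Then the family k ↦ (fun v => op (f k v) (g k v)) is statistically independent of the secret: for all k₁ k₂ : K, PMF.map (fun v => op (f k₁ v) (g k₁ v)) (PMF.uniformOfFintype (ι → I)) = PMF.map (fun v => op (f k₂ v) (g k₂ v)) (PMF.uniformOfFintype (ι → I)). -/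
/-!
Resampling coordinate `i` of a uniform `v : ι → I` by a fresh uniform `x : I` does not change its
law. After resampling, `g k` no longer sees `x`, while `f k` becomes a bijective image of `x`, hence
again uniform and independent of `g k`. So `op (f k) (g k)` has the law of `op x y` with `x` uniform
and `y` drawn from the law of `g k`, which by (iii) does not depend on `k`.
-/

namespace PMF

section

variable {α β : Type*} [Fintype α] [Nonempty α] [Fintype β] [Nonempty β]

theorem map_uniformOfFintype_of_bijective {σ : α → β} (hσ : Function.Bijective σ) :
    (uniformOfFintype α).map σ = uniformOfFintype β := by
  ext b
  obtain ⟨a, rfl⟩ := hσ.surjective b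
  rw [map_apply, tsum_eq_single a (fun a' ha' => if_neg fun h => ha' (hσ.injective h).symm),
    if_pos rfl, uniformOfFintype_apply, uniformOfFintype_apply, Fintype.card_of_bijective hσ]

theorem uniformOfFintype_prod :
    uniformOfFintype (α × β)
      = (uniformOfFintype α).bind fun a => (uniformOfFintype β).map (a, ·) := by
  ext p
  simp only [bind_apply, map_apply, uniformOfFintype_apply, tsum_fintype, Finset.mul_sum, mul_ite,
    mul_zero, ← Fintype.sum_prod_type', Prod.mk.eta]
  rw [Finset.sum_eq_single p (fun x _ hx => if_neg (Ne.symm hx)) (by simp), if_pos rfl,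
    Fintype.card_prod, Nat.cast_mul, ENNReal.mul_inv (by simp) (by simp)]

theorem map_fst_uniformOfFintype_prod :
    (uniformOfFintype (α × β)).map Prod.fst = uniformOfFintype α := by
  simp only [uniformOfFintype_prod, map_bind, map_comp]
  exact (congrArg _ (funext fun a => map_const _ a)).trans (bind_pure _)

end

theorem map_update_uniformOfFintype {ι : Type*} [DecidableEq ι] [Fintype ι] {β : ι → Type*}
    [∀ j, Fintype (β j)] [∀ j, Nonempty (β j)] (i : ι) :
    (uniformOfFintype ((∀ j, β j) × β i)).map (fun p => Function.update p.1 i p.2)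
      = uniformOfFintype (∀ j, β j) := by
  set σ : (∀ j, β j) × β i → (∀ j, β j) × β i := fun p => (Function.update p.1 i p.2, p.1 i)
  have hσ : Function.Involutive σ := fun p => by simp [σ]
  calc _ = ((uniformOfFintype _).map σ).map Prod.fst := by rw [map_comp]; rfl
    _ = _ := by rw [map_uniformOfFintype_of_bijective hσ.bijective, map_fst_uniformOfFintype_prod]

theorem map_uniformOfFintype_eq_bind_of_bijective_update {ι I J γ : Type*} [DecidableEq ι]
    [Fintype ι] [Fintype I] [Nonempty I] (i : ι) (op : I → J → γ) {f : (ι → I) → I}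
    {g : (ι → I) → J} (hf : ∀ v, Function.Bijective fun x => f (Function.update v i x))
    (hg : ∀ v x, g (Function.update v i x) = g v) :
    (uniformOfFintype (ι → I)).map (fun v => op (f v) (g v))
      = ((uniformOfFintype (ι → I)).map g).bind fun y => (uniformOfFintype I).map (op · y) := by
  calc _ = ((uniformOfFintype ((ι → I) × I)).map fun p => Function.update p.1 i p.2).map
          (fun v => op (f v) (g v)) := by rw [map_update_uniformOfFintype]
    _ = (uniformOfFintype (ι → I)).bind fun w =>
          ((uniformOfFintype I).map fun x => f (Function.update w i x)).map (op · (g w)) := by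
      simp only [uniformOfFintype_prod, map_bind, map_comp, Function.comp_def, hg]
    _ = ((uniformOfFintype (ι → I)).map g).bind fun y => (uniformOfFintype I).map (op · y) := by
      simp only [map_uniformOfFintype_of_bijective (hf _), bind_map, Function.comp_def]

end PMF

theorem sid4_sound
    {I ι K : Type*} [Fintype I] [Nonempty I] [DecidableEq ι] [Fintype ι]
    (i : ι) (op : I → I → I) (f g : K → (ι → I) → I)
    (h1 : ∀ (k : K) (v : ι → I),
      Function.Bijective (fun x : I => f k (Function.update v i x)))
    (h2 : ∀ (k : K) (v : ι → I) (x : I), g k (Function.update v i x) = g k v)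
    (h3 : ∀ k₁ k₂ : K, PMF.map (g k₁) (PMF.uniformOfFintype (ι → I))
      = PMF.map (g k₂) (PMF.uniformOfFintype (ι → I)))
    (k₁ k₂ : K) :
    PMF.map (fun v => op (f k₁ v) (g k₁ v)) (PMF.uniformOfFintype (ι → I))
      = PMF.map (fun v => op (f k₂ v) (g k₂ v)) (PMF.uniformOfFintype (ι → I)) := by
  rw [PMF.map_uniformOfFintype_eq_bind_of_bijective_update i op (h1 k₁) (h2 k₁),
    PMF.map_uniformOfFintype_eq_bind_of_bijective_update i op (h1 k₂) (h2 k₂), h3 k₁ k₂]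
end

section
/- Let I be a finite nonempty type, ι a finite type indexing the random variables, α a finite nonempty type, O₂ a finite type, and ρ : O₂ ↪ ι an injection. Let F : (ι → I) → α and g : O₂ → (ι → I) → I satisfy: (i) for every j : O₂, F does not depend on coordinate ρ j; (ii) for all j j' : O₂ with j' ≠ j, g j does not depend on coordinate ρ j'; (iii) for every j : O₂, g j is invertible at coordinate ρ j; and (iv) PMF.map F (PMF.uniformOfFintype (ι → I)) = PMF.uniformOfFintype α. Then PMF.map (fun v => (F v, fun j : O₂ => g j v)) (PMF.uniformOfFintype (ι → I)) = PMF.uniformOfFintype (α × (O₂ → I)). -/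
/-!
Since `F` and the `g j'` with `j' ≠ j` ignore the coordinate `ρ j`, while `g j` is a bijection
of it, the map `T` that overwrites every coordinate `ρ j` of `v` by `g j v` is a bijection of
`ι → I` (so it preserves the uniform distribution) with `F ∘ T = F` and `(T v) ∘ ρ = (g · v)`.
This reduces the claim to `g j v = v (ρ j)`, where it is independence: `F` only reads coordinates
outside the range of `ρ`, so each fiber of `F` splits as a product over the values on that range.
-/

open Function Set

namespace PMF

variable {α β : Type*} [Fintype α] [Nonempty α]

theorem map_uniformOfFintype_apply (f : α → β) (b : β) :
    map f (uniformOfFintype α) b = Nat.card {a // f a = b} / Nat.card α := by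
  classical
  rw [← toOuterMeasure_apply_singleton, toOuterMeasure_map_apply,
    toOuterMeasure_uniformOfFintype_apply, Nat.card_eq_fintype_card, Nat.card_eq_fintype_card]
  rfl

theorem map_eq_uniformOfFintype_iff [Fintype β] [Nonempty β] (f : α → β) :
    map f (uniformOfFintype α) = uniformOfFintype β ↔
      ∀ b, Nat.card {a // f a = b} * Nat.card β = Nat.card α := by
  refine PMF.ext_iff.trans (forall_congr' fun b => ?_)
  rw [map_uniformOfFintype_apply, uniformOfFintype_apply, ← Nat.card_eq_fintype_card,
    ← one_div, ENNReal.div_eq_div_iff (by simp) (ENNReal.natCast_ne_top _) (by simp)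
      (ENNReal.natCast_ne_top _), mul_one, mul_comm]
  exact_mod_cast Iff.rfl

theorem map_uniformOfFintype_of_bijective_s18 [Fintype β] [Nonempty β] {f : α → β}
    (hf : Bijective f) : map f (uniformOfFintype α) = uniformOfFintype β := by
  refine (map_eq_uniformOfFintype_iff f).2 fun b => ?_
  have : Nat.card {a // f a = b} = 1 := Nat.card_eq_one_iff_unique.2
    ⟨⟨fun x y => Subtype.ext (hf.1 (x.2.trans y.2.symm))⟩, nonempty_subtype.2 (hf.2 b)⟩
  rw [this, one_mul, Nat.card_eq_of_bijective f hf]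

end PMF

theorem dependsOn_compl_of_update_eq {ι β : Type*} {α : ι → Type*} [DecidableEq ι]
    {f : (Π i, α i) → β} {s : Set ι} (hs : s.Finite)
    (hf : ∀ i ∈ s, ∀ v x, f (update v i x) = f v) : DependsOn f sᶜ := by
  induction s, hs using Set.Finite.induction_on with
  | empty => simpa using dependsOn_univ f
  | @insert i s _ _ ih =>
    intro v w hvw
    rw [← hf i (mem_insert i s) v (w i)]
    refine ih (fun j hj => hf j (mem_insert_of_mem i hj)) fun k hk => ?_
    rcases eq_or_ne k i with rfl | hki
    · simp
    · rw [update_of_ne hki]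
      exact hvw k (by simp_all)

section Embedding

variable {ι O I : Type*} (ρ : O ↪ ι)

theorem extend_eqOn_compl_range (u : O → I) (v : ι → I) :
    EqOn (extend ρ u v) v (range ρ)ᶜ :=
  fun _ hi => extend_apply' _ _ _ (by simpa using hi)

theorem eq_of_comp_eq_of_eqOn_compl_range {x y : ι → I} (hρ : x ∘ ρ = y ∘ ρ)
    (hc : EqOn x y (range ρ)ᶜ) : x = y := by
  funext i
  by_cases hi : i ∈ range ρ
  · obtain ⟨j, rfl⟩ := hi
    exact congrFun hρ j
  · exact hc hi

noncomputable def fiberProdEquiv {α : Type*} {F : (ι → I) → α} (hF : DependsOn F (range ρ)ᶜ)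
    (a : α) (w : O → I) : {v // F v = a ∧ v ∘ ρ = w} × (O → I) ≃ {v // F v = a} where
  toFun p := ⟨extend ρ p.2 p.1.1, (hF (extend_eqOn_compl_range ρ _ _)).trans p.1.2.1⟩
  invFun v := (⟨extend ρ w v.1, (hF (extend_eqOn_compl_range ρ _ _)).trans v.2,
    extend_comp ρ.injective _ _⟩, v.1 ∘ ρ)
  left_inv := by
    rintro ⟨⟨v, hv, rfl⟩, u⟩
    refine Prod.ext (Subtype.ext ?_) (extend_comp ρ.injective _ _)
    exact eq_of_comp_eq_of_eqOn_compl_range ρ (extend_comp ρ.injective _ _)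
      ((extend_eqOn_compl_range ρ _ _).trans (extend_eqOn_compl_range ρ _ _))
  right_inv := by
    rintro ⟨v, hv⟩
    refine Subtype.ext (eq_of_comp_eq_of_eqOn_compl_range ρ (extend_comp ρ.injective _ _) ?_)
    exact (extend_eqOn_compl_range ρ _ _).trans (extend_eqOn_compl_range ρ _ _)

theorem PMF.map_prodMk_comp_uniformOfFintype [Fintype ι] [DecidableEq ι] [Fintype O]
    [DecidableEq O] [Fintype I] [Nonempty I] {α : Type*} [Fintype α] [Nonempty α]
    {F : (ι → I) → α} (hF : DependsOn F (range ρ)ᶜ)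
    (h : PMF.map F (PMF.uniformOfFintype (ι → I)) = PMF.uniformOfFintype α) :
    PMF.map (fun v => (F v, v ∘ ρ)) (PMF.uniformOfFintype (ι → I)) =
      PMF.uniformOfFintype (α × (O → I)) := by
  rw [PMF.map_eq_uniformOfFintype_iff] at h ⊢
  rintro ⟨a, w⟩
  have hfiber := Nat.card_congr (fiberProdEquiv ρ hF a w)
  rw [Nat.card_prod] at hfiber
  simp only [Prod.mk.injEq, Nat.card_prod]
  rw [← h a, ← hfiber]
  ring

theorem bijective_extend_of_injective_update [Finite ι] [Finite I] [DecidableEq ι]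
    {g : O → (ι → I) → I} (hg : ∀ j, DependsOn (g j) (range ρ \ {ρ j})ᶜ)
    (hinj : ∀ j v, Injective fun x => g j (update v (ρ j) x)) :
    Bijective fun v => extend ρ (fun j => g j v) v := by
  refine Finite.injective_iff_bijective.mp fun v v' h => ?_
  have hc : EqOn v v' (range ρ)ᶜ := fun i hi => by
    rw [← extend_eqOn_compl_range ρ _ v hi, ← extend_eqOn_compl_range ρ _ v' hi, h]
  refine eq_of_comp_eq_of_eqOn_compl_range ρ (funext fun j => hinj j v ?_) hc
  have hgj : g j v = g j v' := by simpa [ρ.injective.extend_apply] using congrFun h (ρ j)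
  have hupd : g j (update v (ρ j) (v' (ρ j))) = g j v' := by
    conv_rhs => rw [← update_eq_self (ρ j) v']
    refine hg j fun i hi => ?_
    rcases eq_or_ne i (ρ j) with rfl | hij
    · simp
    · simp only [update_of_ne hij]
      exact hc fun ⟨k, hk⟩ => hi ⟨⟨k, hk⟩, hij⟩
  simp only [comp_apply, update_eq_self]
  exact hgj.trans hupd.symm

end Embedding

theorem rud_sound
    {I ι α O₂ : Type*} [Fintype I] [Nonempty I] [DecidableEq ι] [Fintype ι]
    [Fintype α] [Nonempty α] [DecidableEq O₂] [Fintype O₂]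
    (ρ : O₂ ↪ ι)
    (F : (ι → I) → α) (g : O₂ → (ι → I) → I)
    (h1 : ∀ (j : O₂) (v : ι → I) (x : I), F (Function.update v (ρ j) x) = F v)
    (h2 : ∀ (j j' : O₂), j' ≠ j → ∀ (v : ι → I) (x : I),
      g j (Function.update v (ρ j') x) = g j v)
    (h3 : ∀ (j : O₂) (v : ι → I),
      Function.Bijective (fun x : I => g j (Function.update v (ρ j) x)))
    (h4 : PMF.map F (PMF.uniformOfFintype (ι → I)) = PMF.uniformOfFintype α) :
    PMF.map (fun v => (F v, fun j : O₂ => g j v)) (PMF.uniformOfFintype (ι → I))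
      = PMF.uniformOfFintype (α × (O₂ → I)) := by
  have hF : DependsOn F (range ρ)ᶜ := dependsOn_compl_of_update_eq (toFinite _) <| by
    rintro _ ⟨j, rfl⟩
    exact h1 j
  have hg (j : O₂) : DependsOn (g j) (range ρ \ {ρ j})ᶜ :=
    dependsOn_compl_of_update_eq (toFinite _) <| by
      rintro _ ⟨⟨j', rfl⟩, hj'⟩
      exact h2 j j' fun h => hj' (congrArg ρ h)
  have hT := bijective_extend_of_injective_update ρ hg fun j v => (h3 j v).injective
  have hfactor : (fun v => (F v, fun j => g j v)) =
      (fun v => (F v, v ∘ ρ)) ∘ fun v => extend ρ (fun j => g j v) v :=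
    funext fun v => Prod.ext (hF (extend_eqOn_compl_range ρ _ v)).symm
      (extend_comp ρ.injective _ v).symm
  rw [hfactor, ← PMF.map_comp, PMF.map_uniformOfFintype_of_bijective_s18 hT]
  exact PMF.map_prodMk_comp_uniformOfFintype ρ hF h4
end
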